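/- arXiv:2501.12952 — 3 statements merged into one kernel-verified Lean document; each statement's English description precedes it below -/
import Mathlib

section
/- Let (X,T) be a topological dynamical system on a compact metric space. If every regionally proximal pair of (X,T) is diagonal (Q(X,T) ⊆ Δ_X), then (X,T) is equicontinuous. -/
open Filter Topology Metric

/-- `(x, y)` is a regionally proximal pair of `(X, T)`. -/
def RegProx {X : Type*} [MetricSpace X] (T : X → X) (p : X × X) : Prop :=
  ∀ ε > (0 : ℝ), ∃ (x' y' : X) (n : ℕ),
    dist p.1 x' ≤ ε ∧ dist p.2 y' ≤ ε ∧ dist (T^[n] x') (T^[n] y') ≤ ε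

/-- The key "backward equicontinuity" property extracted from `Q ⊆ Δ`. -/
def Key {X : Type*} [MetricSpace X] (T : X → X) : Prop :=
  ∀ ε > (0 : ℝ), ∃ δ > (0 : ℝ), ∀ x y : X,
    (∃ n : ℕ, dist (T^[n] x) (T^[n] y) ≤ δ) → dist x y ≤ ε

lemma key_of {X : Type*} [MetricSpace X] [CompactSpace X]
    (T : X → X)
    (h : {p : X × X | RegProx T p} ⊆ {p : X × X | p.1 = p.2}) : Key T := by
  by_contra hc
  unfold Key at hc
  push_neg at hc
  obtain ⟨ε, hε, hbad⟩ := hc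
  -- for each k pick a bad pair
  have hsel : ∀ k : ℕ, ∃ p : X × X, (∃ n : ℕ,
      dist (T^[n] p.1) (T^[n] p.2) ≤ 1 / (k + 1 : ℝ)) ∧ ε < dist p.1 p.2 := by
    intro k
    obtain ⟨x, y, hxy, hd⟩ := hbad (1 / (k + 1 : ℝ)) (by positivity)
    exact ⟨(x, y), hxy, hd⟩
  choose p hp1 hp2 using hsel
  obtain ⟨q, -, φ, hφ, hq⟩ := isCompact_univ.tendsto_subseq (x := p) (fun n => Set.mem_univ _)
  have hq1 : Tendsto (fun k => (p (φ k)).1) atTop (𝓝 q.1) := (continuous_fst.tendsto q).comp hq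
  have hq2 : Tendsto (fun k => (p (φ k)).2) atTop (𝓝 q.2) := (continuous_snd.tendsto q).comp hq
  have hrp : RegProx T q := by
    intro ε' hε'
    have h1 : ∀ᶠ k in atTop, dist q.1 (p (φ k)).1 ≤ ε' := by
      have := hq1.eventually_mem (Metric.closedBall_mem_nhds q.1 hε')
      filter_upwards [this] with k hk using by rw [dist_comm]; exact hk
    have h2 : ∀ᶠ k in atTop, dist q.2 (p (φ k)).2 ≤ ε' := by
      have := hq2.eventually_mem (Metric.closedBall_mem_nhds q.2 hε')
      filter_upwards [this] with k hk using by rw [dist_comm]; exact hk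
    have h3 : ∀ᶠ k in atTop, (1 : ℝ) / (φ k + 1) ≤ ε' := by
      have : Tendsto (fun k : ℕ => (1 : ℝ) / (φ k + 1)) atTop (𝓝 0) := by
        apply Tendsto.comp (f := fun k => φ k)
          (g := fun n : ℕ => (1 : ℝ) / (n + 1)) tendsto_one_div_add_atTop_nhds_zero_nat
        exact hφ.tendsto_atTop
      exact this.eventually_le_const hε'
    obtain ⟨k, hk1, hk2, hk3⟩ := (h1.and (h2.and h3)).exists
    obtain ⟨n, hn⟩ := hp1 (φ k)
    exact ⟨(p (φ k)).1, (p (φ k)).2, n, hk1, hk2, hn.trans hk3⟩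
  have heq : q.1 = q.2 := h hrp
  have : ε ≤ dist q.1 q.2 := by
    have : Tendsto (fun k => dist (p (φ k)).1 (p (φ k)).2) atTop (𝓝 (dist q.1 q.2)) :=
      hq1.dist hq2
    exact le_of_tendsto_of_tendsto' tendsto_const_nhds this fun k => (hp2 (φ k)).le
  rw [heq] at this
  simp at this
  linarith

section Lambda

variable {X : Type*} [MetricSpace X] [CompactSpace X] (T : X → X)

lemma key_inj (hk : Key T) (n : ℕ) : Function.Injective (T^[n]) := by
  intro x y hxy
  rw [← dist_le_zero]
  refine le_of_forall_gt_imp_ge_of_dense fun ε hε => ?_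
  obtain ⟨δ, hδ, hkey⟩ := hk ε hε
  exact hkey x y ⟨n, by rw [hxy, dist_self]; exact hδ.le⟩

/-- The eventual image. -/
def Lam (T : X → X) : Set X := ⋂ n : ℕ, Set.range (T^[n])

lemma range_anti (hT : Continuous T) {m n : ℕ} (hmn : m ≤ n) :
    Set.range (T^[n]) ⊆ Set.range (T^[m]) := by
  obtain ⟨k, rfl⟩ := Nat.exists_eq_add_of_le hmn
  rintro x ⟨u, rfl⟩
  exact ⟨T^[k] u, (Function.iterate_add_apply T m k u).symm⟩

lemma isClosed_range_iter (hT : Continuous T) (n : ℕ) : IsClosed (Set.range (T^[n])) :=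
  (isCompact_range (hT.iterate n)).isClosed

lemma isCompact_range_iter (hT : Continuous T) (n : ℕ) : IsCompact (Set.range (T^[n])) :=
  isCompact_range (hT.iterate n)

lemma isClosed_Lam (hT : Continuous T) : IsClosed (Lam T) :=
  isClosed_iInter (isClosed_range_iter T hT)

lemma isCompact_Lam (hT : Continuous T) : IsCompact (Lam T) :=
  (isClosed_Lam T hT).isCompact

lemma Lam_nonempty [Nonempty X] (hT : Continuous T) : (Lam T).Nonempty := by
  apply IsCompact.nonempty_iInter_of_sequence_nonempty_isCompact_isClosed
  · exact fun n => range_anti T hT (Nat.le_succ n)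
  · exact fun n => Set.range_nonempty _
  · exact isCompact_range_iter T hT 0
  · exact isClosed_range_iter T hT

lemma Lam_mapsTo (hT : Continuous T) {x : X} (hx : x ∈ Lam T) (j : ℕ) :
    T^[j] x ∈ Lam T := by
  rw [Lam, Set.mem_iInter] at hx ⊢
  intro n
  obtain ⟨u, hu⟩ := hx n
  exact ⟨T^[j] u, by rw [← Function.iterate_add_apply, Nat.add_comm,
    Function.iterate_add_apply, hu]⟩

/-- surjectivity of one step on the eventual image -/
lemma Lam_step_surj (hT : Continuous T) {y : X} (hy : y ∈ Lam T) :
    ∃ x ∈ Lam T, T x = y := by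
  rw [Lam, Set.mem_iInter] at hy
  have hsel : ∀ n : ℕ, ∃ x : X, x ∈ Set.range (T^[n]) ∧ T x = y := by
    intro n
    obtain ⟨u, hu⟩ := hy (n + 1)
    exact ⟨T^[n] u, ⟨u, rfl⟩, by rw [← Function.iterate_succ_apply' T n u, hu]⟩
  choose x hx1 hx2 using hsel
  obtain ⟨a, -, φ, hφ, ha⟩ := isCompact_univ.tendsto_subseq (x := x) (fun n => Set.mem_univ _)
  refine ⟨a, ?_, ?_⟩
  · rw [Lam, Set.mem_iInter]
    intro m
    apply (isClosed_range_iter T hT m).mem_of_tendsto ha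
    filter_upwards [Filter.eventually_ge_atTop m] with k hk
    exact range_anti T hT (hk.trans (hφ.le_apply)) (hx1 (φ k))
  · have h1 : Filter.Tendsto (fun k => T (x (φ k))) Filter.atTop (𝓝 (T a)) :=
      (hT.tendsto a).comp ha
    have h2 : (fun k => T (x (φ k))) = fun _ => y := funext fun k => hx2 (φ k)
    rw [h2] at h1
    exact tendsto_nhds_unique h1 tendsto_const_nhds

lemma Lam_surj (hT : Continuous T) {y : X} (hy : y ∈ Lam T) (n : ℕ) :
    ∃ x ∈ Lam T, T^[n] x = y := by
  induction n with
  | zero => exact ⟨y, hy, rfl⟩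
  | succ n ih =>
    obtain ⟨x, hx, rfl⟩ := ih
    obtain ⟨w, hw, rfl⟩ := Lam_step_surj T hT hx
    exact ⟨w, hw, by rw [Function.iterate_succ_apply]⟩

/-- every point of a deep image is close to the eventual image -/
lemma near_Lam [Nonempty X] (hT : Continuous T) {γ : ℝ} (hγ : 0 < γ) :
    ∃ K : ℕ, ∀ v ∈ Set.range (T^[K]), ∃ w ∈ Lam T, dist v w ≤ γ := by
  by_contra hc
  push_neg at hc
  have hC : ∀ K : ℕ, (Set.range (T^[K]) ∩ {v | γ ≤ infDist v (Lam T)}).Nonempty := by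
    intro K
    obtain ⟨v, hv, hfar⟩ := hc K
    refine ⟨v, hv, ?_⟩
    by_contra hlt
    rw [Set.mem_setOf_eq, not_le] at hlt
    obtain ⟨w, hw, hdw⟩ := (infDist_lt_iff (Lam_nonempty T hT)).mp hlt
    exact absurd hdw.le (not_le.mpr (hfar w hw))
  have hclosed : ∀ K : ℕ, IsClosed (Set.range (T^[K]) ∩ {v | γ ≤ infDist v (Lam T)}) := by
    intro K
    exact (isClosed_range_iter T hT K).inter
      (isClosed_le continuous_const (continuous_infDist_pt _))
  have hne : (⋂ K : ℕ, (Set.range (T^[K]) ∩ {v | γ ≤ infDist v (Lam T)})).Nonempty := by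
    apply IsCompact.nonempty_iInter_of_sequence_nonempty_isCompact_isClosed
    · exact fun n => Set.inter_subset_inter_left _ (range_anti T hT (Nat.le_succ n))
    · exact hC
    · exact ((isCompact_range_iter T hT 0).inter_right (by
        exact isClosed_le continuous_const (continuous_infDist_pt _)))
    · exact hclosed
  obtain ⟨v, hv⟩ := hne
  rw [Set.mem_iInter] at hv
  have hvL : v ∈ Lam T := Set.mem_iInter.mpr fun n => (hv n).1
  have : γ ≤ infDist v (Lam T) := (hv 0).2
  rw [infDist_zero_of_mem hvL] at this
  linarith

end Lambda

section Rigid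

variable {X : Type*} [MetricSpace X] [CompactSpace X] (T : X → X)

open Classical in
/-- backward selection map -/
noncomputable def Sb (T : X → X) (n : ℕ) (z : X) : X :=
  if h : ∃ u, T^[n] u = z then h.choose else z

lemma Sb_spec {T : X → X} {n : ℕ} {z : X} (hz : z ∈ Set.range (T^[n])) :
    T^[n] (Sb T n z) = z := by
  have hz' : ∃ u, T^[n] u = z := hz
  rw [Sb, dif_pos hz']
  exact hz'.choose_spec

lemma strictMono_add_le {ψ : ℕ → ℕ} (hψ : StrictMono ψ) (a b : ℕ) :
    ψ a + b ≤ ψ (a + b) := by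
  induction b with
  | zero => simp
  | succ b ih =>
    have h1 : ψ (a + b) < ψ (a + b + 1) := hψ (Nat.lt_succ_self _)
    rw [show a + (b + 1) = (a + b) + 1 from rfl]
    omega

/-- rigidity on the eventual image -/
lemma rigid_Lam [Nonempty X] (hT : Continuous T) (hk : Key T) :
    ∀ η > (0 : ℝ), ∀ M : ℕ, ∃ N : ℕ, M ≤ N ∧ ∀ w ∈ Lam T, dist (T^[N] w) w ≤ η := by
  intro η hη M
  obtain ⟨δ₃, hδ₃pos, hδ₃⟩ := hk (η / 3) (by linarith)
  -- finite net of Λ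
  obtain ⟨t, htL, hcov⟩ := (isCompact_Lam T hT).elim_nhds_subcover
    (fun z => Metric.ball z δ₃) (fun z _ => Metric.ball_mem_nhds z hδ₃pos)
  -- tuples of backward images
  set g : ℕ → (↥t → X) := fun n i => Sb T n i.1 with hg
  obtain ⟨L, -, ψ, hψ, hL⟩ := (isCompact_univ (X := ↥t → X)).tendsto_subseq
    (x := g) (fun n => Set.mem_univ _)
  have hη6 : (0:ℝ) < η / 6 := by linarith
  obtain ⟨K, hK⟩ := Filter.eventually_atTop.mp
    (hL.eventually_mem (Metric.closedBall_mem_nhds L hη6))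
  set n := ψ K with hn
  set m := ψ (K + M) with hm
  have hnm : n + M ≤ m := by
    have := strictMono_add_le hψ K M
    omega
  obtain ⟨N, hNm⟩ : ∃ N, m = n + N := Nat.exists_eq_add_of_le (by omega)
  have hMN : M ≤ N := by omega
  have htuple : ∀ i : ↥t, dist (g n i) (g m i) ≤ η / 3 := by
    intro i
    have h1 : dist (g n) L ≤ η / 6 := hK K le_rfl
    have h2 : dist (g m) L ≤ η / 6 := hK (K + M) (Nat.le_add_right _ _)
    calc dist (g n i) (g m i) ≤ dist (g n) (g m) := dist_le_pi_dist _ _ i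
      _ ≤ dist (g n) L + dist L (g m) := dist_triangle _ _ _
      _ ≤ η / 6 + η / 6 := by rw [dist_comm L]; exact add_le_add h1 h2
      _ = η / 3 := by ring
  refine ⟨N, hMN, fun w hw => ?_⟩
  set z : X := T^[m] w with hz
  have hzL : z ∈ Lam T := Lam_mapsTo T hT hw m
  have hzr : ∀ j : ℕ, z ∈ Set.range (T^[j]) := fun j => Set.mem_iInter.mp hzL j
  -- identify the backward images
  have hSm : Sb T m z = w := key_inj T hk m (by rw [Sb_spec (hzr m)])
  have hSn : Sb T n z = T^[N] w := by
    apply key_inj T hk n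
    rw [Sb_spec (hzr n), ← Function.iterate_add_apply, ← hNm]
  -- net point
  obtain ⟨i, hit, hiz⟩ : ∃ i ∈ t, z ∈ Metric.ball i δ₃ := by
    have := hcov hzL
    simpa using this
  have hiL : (i : X) ∈ Lam T := htL i hit
  have hir : ∀ j : ℕ, i ∈ Set.range (T^[j]) := fun j => Set.mem_iInter.mp hiL j
  have hdzi : dist z i ≤ δ₃ := (Metric.mem_ball.mp hiz).le
  have hterm : ∀ j : ℕ, dist (Sb T j z) (Sb T j i) ≤ η / 3 := by
    intro j
    apply hδ₃
    exact ⟨j, by rw [Sb_spec (hzr j), Sb_spec (hir j)]; exact hdzi⟩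
  have hmid : dist (Sb T n i) (Sb T m i) ≤ η / 3 := htuple ⟨i, hit⟩
  calc dist (T^[N] w) w = dist (Sb T n z) (Sb T m z) := by rw [hSn, hSm]
    _ ≤ dist (Sb T n z) (Sb T n i) + dist (Sb T n i) (Sb T m i)
        + dist (Sb T m i) (Sb T m z) := dist_triangle4 _ _ _ _
    _ ≤ η / 3 + η / 3 + η / 3 := by
        refine add_le_add (add_le_add (hterm n) hmid) ?_
        rw [dist_comm]; exact hterm m
    _ = η := by ring

/-- full uniform rigidity -/
lemma rigid [Nonempty X] (hT : Continuous T) (hk : Key T) :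
    ∀ η > (0 : ℝ), ∀ M : ℕ, ∃ N : ℕ, M ≤ N ∧ ∀ u : X, dist (T^[N] u) u ≤ η := by
  intro η hη M
  obtain ⟨δ₁, hδ₁pos, hδ₁⟩ := hk η hη
  have hη₁ : (0:ℝ) < δ₁ / 3 := by linarith
  obtain ⟨N, hMN, hrig⟩ := rigid_Lam T hT hk (δ₁ / 3) hη₁ M
  -- uniform continuity of T^[N]
  have hUC := Metric.uniformContinuous_iff.mp
    (CompactSpace.uniformContinuous_of_continuous (hT.iterate N))
  obtain ⟨γ₀, hγ₀pos, hγ₀⟩ := hUC (δ₁ / 3) hη₁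
  set γ : ℝ := min (γ₀ / 2) (δ₁ / 3) with hγdef
  have hγpos : 0 < γ := lt_min (by linarith) hη₁
  obtain ⟨K, hKnear⟩ := near_Lam T hT hγpos
  refine ⟨N, hMN, fun u => ?_⟩
  apply hδ₁
  refine ⟨K, ?_⟩
  set v : X := T^[K] u with hv
  obtain ⟨w, hwL, hvw⟩ := hKnear v ⟨u, rfl⟩
  have h1 : dist (T^[N] v) (T^[N] w) ≤ δ₁ / 3 := by
    apply (hγ₀ ?_).le
    calc dist v w ≤ γ := hvw
      _ ≤ γ₀ / 2 := min_le_left _ _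
      _ < γ₀ := by linarith
  have h2 : dist (T^[N] w) w ≤ δ₁ / 3 := hrig w hwL
  have h3 : dist w v ≤ δ₁ / 3 := by
    rw [dist_comm]; exact hvw.trans (min_le_right _ _)
  have hiter : T^[K] (T^[N] u) = T^[N] v := by
    rw [hv, ← Function.iterate_add_apply, ← Function.iterate_add_apply, Nat.add_comm]
  rw [hiter]
  calc dist (T^[N] v) (T^[K] u)
      ≤ dist (T^[N] v) (T^[N] w) + dist (T^[N] w) w + dist w v := dist_triangle4 _ _ _ _
    _ ≤ δ₁ / 3 + δ₁ / 3 + δ₁ / 3 := add_le_add (add_le_add h1 h2) h3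
    _ = δ₁ := by ring

end Rigid

/-- If every regionally proximal pair of `(X, T)` is diagonal, then `(X, T)` is
equicontinuous. -/
theorem stmt8 {X : Type*} [MetricSpace X] [CompactSpace X]
    (T : X → X) (hT : Continuous T)
    (h : {p : X × X | RegProx T p} ⊆ {p : X × X | p.1 = p.2}) :
    ∀ ε > (0 : ℝ), ∃ δ > (0 : ℝ), ∀ x y : X, dist x y ≤ δ →
      ∀ n : ℕ, dist (T^[n] x) (T^[n] y) ≤ ε := by
  intro ε hε
  rcases isEmpty_or_nonempty X with hX | hX
  · exact ⟨ε, hε, fun x => (IsEmpty.false x).elim⟩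
  have hk : Key T := key_of T h
  obtain ⟨δ₁, hδ₁pos, hδ₁⟩ := hk ε hε
  refine ⟨δ₁ / 3, by linarith, fun x y hxy n => ?_⟩
  obtain ⟨N, hnN, hrig⟩ := rigid T hT hk (δ₁ / 3) (by linarith) n
  obtain ⟨m, hm⟩ : ∃ m, N = m + n := by
    obtain ⟨m, hm⟩ := Nat.exists_eq_add_of_le hnN
    exact ⟨m, by omega⟩
  apply hδ₁
  refine ⟨m, ?_⟩
  have hx' : T^[m] (T^[n] x) = T^[N] x := by
    rw [← Function.iterate_add_apply, ← hm]
  have hy' : T^[m] (T^[n] y) = T^[N] y := by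
    rw [← Function.iterate_add_apply, ← hm]
  rw [hx', hy']
  calc dist (T^[N] x) (T^[N] y)
      ≤ dist (T^[N] x) x + dist x y + dist y (T^[N] y) := dist_triangle4 _ _ _ _
    _ ≤ δ₁ / 3 + δ₁ / 3 + δ₁ / 3 := by
        refine add_le_add (add_le_add (hrig x) hxy) ?_
        rw [dist_comm]; exact hrig y
    _ = δ₁ := by ring
end

section
/- Let X be a compact metrizable space and for each n ∈ ℕ let φₙ : K(X) → K(X) be a Borel measurable function, where K(X) is the hyperspace of nonempty compact subsets with the Vietoris topology. Then the map φ : K(X) → K(X) defined by φ(A) = closure(⋃ₙ φₙ(A)) is Borel measurable. -/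
open TopologicalSpace Metric EMetric Set ENNReal NNReal

lemma aux_edist_eq {X : Type*} [MetricSpace X] (s t : NonemptyCompacts X) :
    edist s t = hausdorffEdist (s : Set X) (t : Set X) := rfl

lemma aux_hausdorffEdist_union_le {X : Type*} [MetricSpace X] (s t s' t' : Set X) :
    hausdorffEdist (s ∪ t) (s' ∪ t') ≤ max (hausdorffEdist s s') (hausdorffEdist t t') := by
  apply hausdorffEdist_le_of_infEdist
  · rintro x (hx | hx)
    · exact le_trans (le_trans (infEdist_anti subset_union_left)
        (infEdist_le_hausdorffEdist_of_mem hx)) (le_max_left _ _)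
    · exact le_trans (le_trans (infEdist_anti subset_union_right)
        (infEdist_le_hausdorffEdist_of_mem hx)) (le_max_right _ _)
  · rintro x (hx | hx)
    · refine le_trans (le_trans (infEdist_anti subset_union_left)
        (infEdist_le_hausdorffEdist_of_mem hx)) ?_
      rw [hausdorffEdist_comm]; exact le_max_left _ _
    · refine le_trans (le_trans (infEdist_anti subset_union_right)
        (infEdist_le_hausdorffEdist_of_mem hx)) ?_
      rw [hausdorffEdist_comm]; exact le_max_right _ _

lemma aux_continuous_sup {X : Type*} [MetricSpace X] :
    Continuous (fun p : NonemptyCompacts X × NonemptyCompacts X => p.1 ⊔ p.2) := by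
  refine (LipschitzWith.of_edist_le fun p q => ?_).continuous
  calc edist (p.1 ⊔ p.2) (q.1 ⊔ q.2)
      = hausdorffEdist ((p.1 : Set X) ∪ p.2) ((q.1 : Set X) ∪ q.2) := by
        rw [aux_edist_eq]; simp [NonemptyCompacts.coe_sup]
    _ ≤ max (hausdorffEdist (p.1 : Set X) q.1) (hausdorffEdist (p.2 : Set X) q.2) :=
        aux_hausdorffEdist_union_le _ _ _ _
    _ = edist p q := by rw [Prod.edist_eq]; rfl

/-- If each `φₙ : K(X) → K(X)` is Borel measurable, then `A ↦ closure (⋃ n, φₙ A)` is Borel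
measurable as a map of the hyperspace of nonempty compact subsets. -/
theorem stmt10 {X : Type*} [MetricSpace X] [CompactSpace X]
    [MeasurableSpace (NonemptyCompacts X)] [BorelSpace (NonemptyCompacts X)]
    (φn : ℕ → NonemptyCompacts X → NonemptyCompacts X)
    (hφn : ∀ n : ℕ, Measurable (φn n)) :
    Measurable (fun A : NonemptyCompacts X =>
      (⟨⟨closure (⋃ n : ℕ, (φn n A : Set X)), IsClosed.isCompact isClosed_closure⟩,
        (φn 0 A).nonempty.mono ((Set.subset_iUnion (fun n => (φn n A : Set X)) 0).trans
          subset_closure)⟩ : NonemptyCompacts X)) := by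
  -- partial unions
  set g : ℕ → NonemptyCompacts X → NonemptyCompacts X :=
    fun N => Nat.rec (φn 0) (fun n ih A => ih A ⊔ φn (n + 1) A) N with hg
  have hgsucc : ∀ N A, g (N + 1) A = g N A ⊔ φn (N + 1) A := fun N A => rfl
  have hgmeas : ∀ N, Measurable (g N) := by
    intro N
    induction N with
    | zero => exact hφn 0
    | succ n ih =>
      exact (aux_continuous_sup.measurable).comp (ih.prodMk (hφn (n + 1)))
  have hsub : ∀ N A, (g N A : Set X) ⊆ ⋃ n, (φn n A : Set X) := by
    intro N A
    induction N with
    | zero => exact Set.subset_iUnion (fun n => (φn n A : Set X)) 0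
    | succ n ih =>
      rw [hgsucc, NonemptyCompacts.coe_sup]
      exact Set.union_subset ih (Set.subset_iUnion (fun n => (φn n A : Set X)) (n + 1))
  have hmem : ∀ A n N, n ≤ N → (φn n A : Set X) ⊆ g N A := by
    intro A n N hnN
    induction N with
    | zero => cases Nat.le_zero.mp hnN; exact subset_rfl
    | succ N ih =>
      rw [hgsucc, NonemptyCompacts.coe_sup]
      rcases Nat.lt_or_ge n (N + 1) with h | h
      · exact (ih (Nat.lt_succ_iff.mp h)).trans subset_union_left
      · have : n = N + 1 := le_antisymm hnN h
        subst this
        exact subset_union_right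
  -- convergence
  apply measurable_of_tendsto_metrizable hgmeas
  rw [tendsto_pi_nhds]
  intro A
  set L : Set X := closure (⋃ n, (φn n A : Set X)) with hL
  have hLc : IsCompact L := isClosed_closure.isCompact
  rw [EMetric.tendsto_atTop]
  intro ε hε
  obtain ⟨δ, hδ0, hδε⟩ := ENNReal.lt_iff_exists_nnreal_btwn.mp hε
  have hδ0' : (0 : ℝ≥0∞) < δ := hδ0
  -- cover L by balls of radius δ centered at points of the union
  have hcover : L ⊆ ⋃ x ∈ ⋃ n, (φn n A : Set X), EMetric.ball x (δ : ℝ≥0∞) := by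
    intro y hy
    obtain ⟨x, hx, hxy⟩ := EMetric.mem_closure_iff.mp hy (δ : ℝ≥0∞) hδ0'
    exact Set.mem_biUnion hx (EMetric.mem_ball.mpr hxy)
  obtain ⟨F, hFsub, hFfin, hFcover⟩ := hLc.elim_finite_subcover_image
    (fun x _ => EMetric.isOpen_ball) hcover
  -- choose for each point of F an index
  have hch : ∀ x : X, ∃ n, x ∈ F → x ∈ (φn n A : Set X) := by
    intro x
    by_cases hx : x ∈ F
    · obtain ⟨n, hn⟩ := Set.mem_iUnion.mp (hFsub hx)
      exact ⟨n, fun _ => hn⟩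
    · exact ⟨0, fun h => absurd h hx⟩
  choose idx hidx using hch
  obtain ⟨N₀, hN₀⟩ := (hFfin.image idx).bddAbove
  refine ⟨N₀, fun N hN => ?_⟩
  have key : hausdorffEdist (g N A : Set X) L ≤ (δ : ℝ≥0∞) := by
    apply hausdorffEdist_le_of_infEdist
    · intro x hx
      have hxL : x ∈ L := subset_closure (hsub N A hx)
      simp [infEdist_zero_of_mem hxL]
    · intro y hy
      obtain ⟨x, hxF, hxy⟩ := Set.mem_iUnion₂.mp (hFcover hy)
      have hxg : x ∈ (g N A : Set X) :=
        hmem A (idx x) N (le_trans (hN₀ (Set.mem_image_of_mem idx hxF)) hN) (hidx x hxF)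
      calc infEdist y (g N A : Set X) ≤ edist y x := infEdist_le_edist_of_mem hxg
        _ ≤ (δ : ℝ≥0∞) := le_of_lt (by rwa [EMetric.mem_ball] at hxy)
  calc edist (g N A) _ = hausdorffEdist (g N A : Set X) L := rfl
    _ ≤ (δ : ℝ≥0∞) := key
    _ < ε := hδε
end

section
/- Let X be a compact metric space and A ⊆ X × X a compact relation. Then the closure of the transitive closure of A equals closure(⋃ₙ ∼ₙ(A)), where ∼ₙ(A) is the set of pairs connected by a chain of length n in A. Consequently, the map Γ : K(X×X) → K(X×X), Γ(A) = closure(A⁺ ∪ Δ_X), is Borel measurable. -/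
open TopologicalSpace

/-- Transitive closure of a relation. -/
def transClos {Z : Type*} (F : Set (Z × Z)) : Set (Z × Z) :=
  {p | Relation.TransGen (fun a b => (a, b) ∈ F) p.1 p.2}

/-- `∼ₙ(A)`: pairs joined by a chain of length `n` in `A`. -/
def chainRel {X : Type*} (n : ℕ) (A : Set (X × X)) : Set (X × X) :=
  {p | ∃ f : ℕ → X, f 0 = p.1 ∧ f n = p.2 ∧ ∀ i < n, (f i, f (i + 1)) ∈ A}

open Set Metric

/-!
Chains of length `n + 1` in `A` are exactly the `TransGen`-paths, so already as sets
`A⁺ = ⋃ₙ ∼ₙ₊₁(A)` and `A⁺ ∪ Δ_X = ⋃ₙ ∼ₙ(A)`.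

For measurability, write `Γ(A) = closure S(A)` with `S(A) = ⋃ₙ ∼ₙ(A)`. The Hausdorff distance from
`S(A)` to a fixed set `K` is computed from the countably many events "`S(A)` meets `U`" with `U`
open (test the points of a countable dense subset of `K`), and every open set is a countable
union of closed ones. For closed `F`, the set of `A` with `∼ₙ(A)` meeting `F` is closed, because
by compactness of `ℕ → X` a limit of chains in `Aₖ` is a chain in `lim Aₖ`. Finally, a map into a
second countable metric space is Borel as soon as its distances to all points are measurable.
-/

section Chains

variable {X : Type*} {A : Set (X × X)}

theorem mem_chainRel_zero {a b : X} : (a, b) ∈ chainRel 0 A ↔ a = b :=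
  ⟨fun ⟨f, h0, h1, _⟩ => h0.symm.trans h1, fun h => ⟨fun _ => a, rfl, h, by simp⟩⟩

theorem mem_chainRel_succ {n : ℕ} {a c : X} :
    (a, c) ∈ chainRel (n + 1) A ↔ ∃ b, (a, b) ∈ chainRel n A ∧ (b, c) ∈ A := by
  constructor
  · rintro ⟨f, h0, hn, hf⟩
    exact ⟨f n, ⟨f, h0, rfl, fun i hi => hf i (by omega)⟩, by simpa [hn] using hf n n.lt_succ_self⟩
  · rintro ⟨b, ⟨f, h0, hn, hf⟩, hbc⟩
    refine ⟨Function.update f (n + 1) c, by simpa using h0, by simp, fun i hi => ?_⟩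
    rcases Nat.lt_succ_iff_lt_or_eq.1 hi with hi | rfl
    · rw [Function.update_of_ne (by omega), Function.update_of_ne (by omega)]
      exact hf i hi
    · simpa [hn] using hbc

theorem exists_mem_chainRel_iff_reflTransGen {a b : X} :
    (∃ n, (a, b) ∈ chainRel n A) ↔ Relation.ReflTransGen (fun x y => (x, y) ∈ A) a b := by
  constructor
  · rintro ⟨n, h⟩
    induction n generalizing b with
    | zero => exact mem_chainRel_zero.1 h ▸ .refl
    | succ n ih =>
      obtain ⟨c, hac, hcb⟩ := mem_chainRel_succ.1 h
      exact (ih hac).tail hcb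
  · intro h
    induction h with
    | refl => exact ⟨0, mem_chainRel_zero.2 rfl⟩
    | tail _ hcb ih =>
      obtain ⟨n, hn⟩ := ih
      exact ⟨n + 1, mem_chainRel_succ.2 ⟨_, hn, hcb⟩⟩

theorem transClos_eq_iUnion_chainRel_succ : transClos A = ⋃ n, chainRel (n + 1) A := by
  ext ⟨a, c⟩
  simp only [transClos, mem_ofPred_eq, mem_iUnion, mem_chainRel_succ,
    Relation.TransGen.tail'_iff, ← exists_mem_chainRel_iff_reflTransGen]
  exact ⟨fun ⟨b, ⟨n, h⟩, hbc⟩ => ⟨n, b, h, hbc⟩, fun ⟨n, b, h, hbc⟩ => ⟨b, ⟨n, h⟩, hbc⟩⟩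

theorem transClos_union_diagonal_eq_iUnion_chainRel :
    transClos A ∪ {p | p.1 = p.2} = ⋃ n, chainRel n A := by
  ext ⟨a, b⟩
  simp only [mem_union, mem_iUnion, exists_mem_chainRel_iff_reflTransGen,
    Relation.reflTransGen_iff_eq_or_transGen, transClos, mem_ofPred_eq, eq_comm (a := b)]
  tauto

end Chains

section HitMeasurability

variable {α β : Type*} [MeasurableSpace α] [PseudoEMetricSpace β]

theorem measurable_of_measurable_edist [SecondCountableTopology β] [MeasurableSpace β]
    [BorelSpace β] {f : α → β} (hf : ∀ b, Measurable fun a => edist (f a) b) : Measurable f := by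
  refine measurable_of_isOpen fun V hV => ?_
  obtain ⟨c, hcV, hc, hVc⟩ := (IsSeparable.of_separableSpace Vᶜ).exists_countable_dense_subset
  have hclosure : closure c = Vᶜ :=
    (closure_minimal hcV hV.isClosed_compl).antisymm hVc
  have : f ⁻¹' V = {a | 0 < infEDist (f a) c} := by
    ext a
    rw [mem_preimage, mem_ofPred_eq, infEDist_pos_iff_notMem_closure, hclosure, notMem_compl_iff]
  rw [this]
  exact measurableSet_lt measurable_const (Measurable.biInf c hc fun b _ => hf b)

variable {S : α → Set β}

theorem measurableSet_inter_nonempty_of_isOpen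
    (hS : ∀ F, IsClosed F → MeasurableSet {a | (S a ∩ F).Nonempty}) {U : Set β} (hU : IsOpen U) :
    MeasurableSet {a | (S a ∩ U).Nonempty} := by
  obtain ⟨F, hF, -, rfl, -⟩ := hU.exists_iUnion_isClosed
  simp only [inter_iUnion, nonempty_iUnion, ofPred_exists]
  exact .iUnion fun n => hS _ (hF n)

section
variable (hS : ∀ U, IsOpen U → MeasurableSet {a | (S a ∩ U).Nonempty})
include hS

theorem measurableSet_setOf_subset_of_isClosed {F : Set β} (hF : IsClosed F) :
    MeasurableSet {a | S a ⊆ F} := by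
  simpa only [inter_compl_nonempty_iff, compl_ofPred, not_not] using (hS _ hF.isOpen_compl).compl

theorem measurable_infEDist_of_hits (y : β) : Measurable fun a => infEDist y (S a) :=
  measurable_of_Iio fun r => by
    simpa only [preimage, mem_Iio, infEDist_lt_iff, inter_nonempty, mem_eball'] using
      hS _ (isOpen_eball (x := y) (ε := r))

theorem measurable_hausdorffEDist_of_hits [SecondCountableTopology β] (K : Set β) :
    Measurable fun a => hausdorffEDist (S a) K := by
  obtain ⟨c, hcK, hc, hKc⟩ := (IsSeparable.of_separableSpace K).exists_countable_dense_subset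
  have hcl : closure c = closure K :=
    (closure_mono hcK).antisymm (closure_minimal hKc isClosed_closure)
  have hK : ∀ s, hausdorffEDist s K = hausdorffEDist s c := fun s => by
    rw [← hausdorffEDist_closure_right, ← hcl, hausdorffEDist_closure_right]
  simp_rw [hK]
  refine measurable_of_Iic fun r => ?_
  have : (fun a => hausdorffEDist (S a) c) ⁻¹' Iic r =
      {a | S a ⊆ {x | infEDist x c ≤ r}} ∩ ⋂ y ∈ c, {a | infEDist y (S a) ≤ r} := by
    ext a
    simp [hausdorffEDist_def, subset_def]
  rw [this]
  exact (measurableSet_setOf_subset_of_isClosed hS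
    (isClosed_le continuous_infEDist continuous_const)).inter
    (.biInter hc fun y _ => measurableSet_le (measurable_infEDist_of_hits hS y) measurable_const)

end

end HitMeasurability

theorem measurable_of_coe_eq_closure {α β : Type*} [MeasurableSpace α] [EMetricSpace β]
    [SecondCountableTopology β]
    [MeasurableSpace (NonemptyCompacts β)] [BorelSpace (NonemptyCompacts β)]
    {S : α → Set β} {f : α → NonemptyCompacts β} (hf : ∀ a, (f a : Set β) = closure (S a))
    (hS : ∀ F, IsClosed F → MeasurableSet {a | (S a ∩ F).Nonempty}) : Measurable f :=
  measurable_of_measurable_edist fun K => by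
    show Measurable fun a => hausdorffEDist (f a : Set β) K
    simp_rw [hf, hausdorffEDist_closure_left]
    exact measurable_hausdorffEDist_of_hits
      (fun _ hU => measurableSet_inter_nonempty_of_isOpen hS hU) K

section ChainHits

variable {X : Type*} [TopologicalSpace X] [T2Space X]

theorem TopologicalSpace.NonemptyCompacts.isClosed_setOf_mem :
    IsClosed {q : NonemptyCompacts X × X | q.2 ∈ (q.1 : Set X)} := by
  have := (NonemptyCompacts.isOpen_setOfPred_disjoint_coe (α := X)).preimage
    ((NonemptyCompacts.continuous_singleton.comp continuous_snd).prodMk continuous_fst)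
  simpa [← isOpen_compl_iff, compl_ofPred] using this

theorem isClosed_setOf_chainRel_inter_nonempty [CompactSpace X] (n : ℕ) {F : Set (X × X)}
    (hF : IsClosed F) :
    IsClosed {A : NonemptyCompacts (X × X) | (chainRel n (A : Set (X × X)) ∩ F).Nonempty} := by
  have hlink (i : ℕ) : IsClosed {q : NonemptyCompacts (X × X) × (ℕ → X) |
      (q.2 i, q.2 (i + 1)) ∈ (q.1 : Set (X × X))} :=
    NonemptyCompacts.isClosed_setOf_mem.preimage
      (continuous_fst.prodMk (g := fun q : NonemptyCompacts (X × X) × (ℕ → X) =>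
        (q.2 i, q.2 (i + 1))) (by fun_prop))
  have hchains : IsClosed {q : NonemptyCompacts (X × X) × (ℕ → X) |
      (∀ i < n, (q.2 i, q.2 (i + 1)) ∈ (q.1 : Set (X × X))) ∧ (q.2 0, q.2 n) ∈ F} := by
    simp only [ofPred_and, ofPred_forall]
    exact .inter (isClosed_biInter fun i _ => hlink i)
      (hF.preimage (f := fun q : NonemptyCompacts (X × X) × (ℕ → X) => (q.2 0, q.2 n))
        (by fun_prop))
  convert isClosedMap_fst_of_compactSpace _ hchains using 1
  ext A
  simp only [chainRel, mem_ofPred_eq, mem_image, Prod.exists, exists_and_right, exists_eq_right]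
  constructor
  · rintro ⟨⟨a, b⟩, ⟨f, rfl, rfl, hf⟩, hF⟩
    exact ⟨f, hf, hF⟩
  · rintro ⟨f, hf, hF⟩
    exact ⟨_, ⟨f, rfl, rfl, hf⟩, hF⟩

end ChainHits

/-- The closure of the transitive closure of a compact relation `A` equals
`closure (⋃ₙ ∼ₙ(A))`, and consequently the map `Γ(A) = closure (A⁺ ∪ Δ_X)` is Borel
measurable on the hyperspace `K(X × X)`. -/
theorem stmt12 {X : Type*} [MetricSpace X] [CompactSpace X] [Nonempty X]
    [MeasurableSpace (NonemptyCompacts (X × X))] [BorelSpace (NonemptyCompacts (X × X))] :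
    (∀ A : Set (X × X), IsCompact A →
        closure (transClos A) = closure (⋃ n : ℕ, chainRel (n + 1) A)) ∧
      Measurable (fun A : NonemptyCompacts (X × X) =>
        (⟨⟨closure (transClos (A : Set (X × X)) ∪ {p : X × X | p.1 = p.2}),
            IsClosed.isCompact isClosed_closure⟩,
          ⟨(Classical.arbitrary X, Classical.arbitrary X),
            subset_closure (Or.inr rfl)⟩⟩ : NonemptyCompacts (X × X))) := by
  refine ⟨fun A _ => by rw [transClos_eq_iUnion_chainRel_succ], ?_⟩
  refine measurable_of_coe_eq_closure
    (S := fun A : NonemptyCompacts (X × X) => ⋃ n, chainRel n (A : Set (X × X)))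
    (fun A => congrArg closure transClos_union_diagonal_eq_iUnion_chainRel) fun F hF => ?_
  simp only [iUnion_inter, nonempty_iUnion, ofPred_exists]
  exact .iUnion fun n => (isClosed_setOf_chainRel_inter_nonempty n hF).measurableSet
end
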